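/- Let {a_n}_{n≥1} be a nonnegative real sequence which is a mean value bounded variation sequence (MVBVS). If lim_{n→∞} n·a_n = 0, then the sine series ∑_{n=1}^∞ a_n sin(nx) converges uniformly on ℝ, i.e., its partial sums S_n(x) = ∑_{k=1}^n a_k sin(kx) converge uniformly to the sum function f, so that lim_{n→∞} sup_x |f(x) − S_n(x)| = 0. -/

import Mathlib

/-!
The MVBV inequality bounds the variation of `a` over the block `[n, 2n]` by `C / n` times the
sum of `a` over the window `[n / λ, λ n]`. Since `k aₖ → 0`, that window sum tends to `0`, so the
block variations are `o(1 / n)`, and summing over the dyadic blocks `[2ʲ p, 2ʲ⁺¹ p)` gives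
`∑_{k ≥ p} |aₖ - aₖ₊₁| = o(1 / p)`.

For `x ∈ (0, π]`, split a tail `∑_{k ≥ p} aₖ sin (k x)` at `p + ⌊1 / x⌋`. Each of the first
`⌊1 / x⌋` terms is at most `(k aₖ) x`, and the rest is handled by Abel summation against the
bound `|∑_{k < n} sin (k x)| ≤ π / x`. Both pieces are `o(1)` uniformly in `x`; oddness and
`2π`-periodicity extend this to all of `ℝ`, so the partial sums are uniformly Cauchy.
-/

open Filter

/-- A nonnegative sequence (indexed from 1) is a mean value bounded variation sequence. -/
def IsMVBVS (a : ℕ → ℝ) : Prop :=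
  ∃ lam : ℝ, 2 ≤ lam ∧ ∃ C : ℝ, 0 < C ∧ ∀ n : ℕ, 1 ≤ n →
    ∑ k ∈ Finset.Icc n (2 * n), |a k - a (k + 1)| ≤
      (C / n) * ∑ k ∈ Finset.Icc ⌊(n : ℝ) / lam⌋₊ ⌊lam * n⌋₊, a k

open Finset Real Topology

theorem abs_sum_range_sin_mul_le {x : ℝ} (hx₀ : 0 < x) (hxπ : x ≤ π) (n : ℕ) :
    |∑ k ∈ range n, sin (k * x)| ≤ π / x := by
  have hjordan : x / π ≤ sin (x / 2) := by
    have := mul_le_sin (x := x / 2) (by positivity) (by linarith)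
    calc x / π = 2 / π * (x / 2) := by ring
      _ ≤ _ := this
  have hsin_pos : 0 < sin (x / 2) := (div_pos hx₀ pi_pos).trans_le hjordan
  set F : ℕ → ℝ := fun k => cos ((k - 1 / 2) * x)
  have htelescope : (∑ k ∈ range n, sin (k * x)) * (2 * sin (x / 2)) = F 0 - F n := by
    rw [sum_mul, ← sum_range_sub']
    refine sum_congr rfl fun k _ => ?_
    rw [← mul_assoc, mul_comm _ (2 : ℝ), two_mul_sin_mul_sin]
    simp only [F]
    push_cast
    ring_nf
  have hF : |F 0 - F n| ≤ 2 := (abs_sub _ _).trans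
    ((add_le_add (abs_cos_le_one _) (abs_cos_le_one _)).trans_eq one_add_one_eq_two)
  rw [← htelescope, abs_mul, abs_of_pos (by positivity : 0 < 2 * sin (x / 2))] at hF
  calc |∑ k ∈ range n, sin (k * x)| ≤ 1 / sin (x / 2) := by
        rw [le_div_iff₀ hsin_pos]; linarith
    _ ≤ π / x := by
        rw [div_le_div_iff₀ hsin_pos hx₀, one_mul]
        rwa [div_le_iff₀ pi_pos, mul_comm] at hjordan

theorem abs_sum_Ico_mul_le {f g : ℕ → ℝ} {B : ℝ} (hB : ∀ n, |∑ i ∈ range n, g i| ≤ B)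
    {m n : ℕ} (hmn : m < n) :
    |∑ i ∈ Ico m n, f i * g i|
      ≤ B * (|f m| + |f (n - 1)| + ∑ i ∈ Ico m (n - 1), |f (i + 1) - f i|) := by
  simp only [← smul_eq_mul, sum_Ico_by_parts f g hmn]
  simp only [smul_eq_mul]
  calc _ ≤ |f (n - 1) * ∑ i ∈ range n, g i| + |f m * ∑ i ∈ range m, g i|
        + ∑ i ∈ Ico m (n - 1), |(f (i + 1) - f i) * ∑ j ∈ range (i + 1), g j| :=
        (abs_sub _ _).trans (add_le_add (abs_sub _ _) (abs_sum_le_sum_abs _ _))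
    _ ≤ |f (n - 1)| * B + |f m| * B + ∑ i ∈ Ico m (n - 1), |f (i + 1) - f i| * B := by
        simp only [abs_mul]
        gcongr with i <;> apply hB
    _ = _ := by rw [← sum_mul]; ring

theorem le_div_of_natCast_mul_le {a ε : ℝ} {b k : ℕ} (hb : 0 < b) (hbk : b ≤ k) (ha : 0 ≤ a)
    (h : k * a ≤ ε) : a ≤ ε / b := by
  rw [le_div_iff₀ (Nat.cast_pos.2 hb), mul_comm]
  exact (mul_le_mul_of_nonneg_right (Nat.cast_le.2 hbk) ha).trans h

theorem abs_sum_Ico_mul_sin_le_of_short {a : ℕ → ℝ} {ε x : ℝ} {p q : ℕ} (hε : 0 ≤ ε)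
    (ha : ∀ k ≥ p, 0 ≤ a k) (hsmall : ∀ k ≥ p, k * a k ≤ ε) (hx : 0 ≤ x)
    (hpq : ((q - p : ℕ) : ℝ) * x ≤ 1) :
    |∑ k ∈ Ico p q, a k * sin (k * x)| ≤ ε := by
  have hterm : ∀ k ∈ Ico p q, |a k * sin (k * x)| ≤ ε * x := by
    intro k hk
    have hk := (mem_Ico.1 hk).1
    have hsin : |sin (k * x)| ≤ k * x := abs_sin_le_abs.trans_eq (abs_of_nonneg (by positivity))
    rw [abs_mul, abs_of_nonneg (ha k hk)]
    calc a k * |sin (k * x)| ≤ a k * (k * x) := mul_le_mul_of_nonneg_left hsin (ha k hk)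
      _ = (k * a k) * x := by ring
      _ ≤ ε * x := mul_le_mul_of_nonneg_right (hsmall k hk) hx
  calc |∑ k ∈ Ico p q, a k * sin (k * x)| ≤ ∑ k ∈ Ico p q, |a k * sin (k * x)| :=
        abs_sum_le_sum_abs _ _
    _ ≤ #(Ico p q) • (ε * x) := sum_le_card_nsmul _ _ _ hterm
    _ = ((q - p : ℕ) * x) * ε := by rw [nsmul_eq_mul, Nat.card_Ico]; ring
    _ ≤ ε := mul_le_of_le_one_left hε hpq

theorem abs_sum_Ico_mul_sin_le_of_long {a : ℕ → ℝ} {ε x : ℝ} {r : ℕ} (hx₀ : 0 < x)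
    (hxπ : x ≤ π) (hr : 1 ≤ r * x) (ha : ∀ k ≥ r, 0 ≤ a k) (hsmall : ∀ k ≥ r, k * a k ≤ ε)
    (hvar : ∀ q, ∑ k ∈ Ico r q, |a k - a (k + 1)| ≤ ε / r) (q : ℕ) :
    |∑ k ∈ Ico r q, a k * sin (k * x)| ≤ 3 * π * ε := by
  have hr₀ : 0 < r := Nat.pos_of_ne_zero fun h => by simp [h] at hr; linarith
  have hε : 0 ≤ ε := (mul_nonneg r.cast_nonneg (ha r le_rfl)).trans (hsmall r le_rfl)
  rcases le_or_gt q r with hqr | hrq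
  · rw [Ico_eq_empty_of_le hqr, sum_empty, abs_zero]
    positivity
  have hbound : ∀ k ≥ r, |a k| ≤ ε / r := fun k hk => by
    rw [abs_of_nonneg (ha k hk)]
    exact le_div_of_natCast_mul_le hr₀ hk (ha k hk) (hsmall k hk)
  have hvar' : ∑ k ∈ Ico r (q - 1), |a (k + 1) - a k| ≤ ε / r := by
    simpa only [abs_sub_comm] using hvar (q - 1)
  calc |∑ k ∈ Ico r q, a k * sin (k * x)|
      ≤ π / x * (|a r| + |a (q - 1)| + ∑ k ∈ Ico r (q - 1), |a (k + 1) - a k|) :=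
        abs_sum_Ico_mul_le (abs_sum_range_sin_mul_le hx₀ hxπ) hrq
    _ ≤ π / x * (ε / r + ε / r + ε / r) := by
        gcongr
        exacts [hbound r le_rfl, hbound (q - 1) (by omega)]
    _ = 3 * π * ε / (r * x) := by field_simp; ring
    _ ≤ 3 * π * ε := div_le_self (by positivity) hr

theorem abs_sum_Ico_mul_sin_le {a : ℕ → ℝ} {ε : ℝ} {p : ℕ} (hp : 0 < p)
    (ha : ∀ k ≥ p, 0 ≤ a k) (hsmall : ∀ k ≥ p, k * a k ≤ ε)
    (hvar : ∀ r ≥ p, ∀ q, ∑ k ∈ Ico r q, |a k - a (k + 1)| ≤ ε / r) (q : ℕ) {x : ℝ}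
    (hx : x ∈ Set.Ioc 0 π) :
    |∑ k ∈ Ico p q, a k * sin (k * x)| ≤ (1 + 3 * π) * ε := by
  obtain ⟨hx₀, hxπ⟩ := hx
  have hε : 0 ≤ ε := (mul_nonneg p.cast_nonneg (ha p le_rfl)).trans (hsmall p le_rfl)
  set r := p + ⌊1 / x⌋₊
  have hr : 1 ≤ r * x := by
    have h₁ : 1 / x < ⌊1 / x⌋₊ + 1 := Nat.lt_floor_add_one _
    have h₂ : (⌊1 / x⌋₊ : ℝ) + 1 ≤ r := by exact_mod_cast (by omega : ⌊1 / x⌋₊ + 1 ≤ r)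
    rw [div_lt_iff₀ hx₀] at h₁
    nlinarith
  have hshort : ∀ q' ≤ r, |∑ k ∈ Ico p q', a k * sin (k * x)| ≤ ε := fun q' hq' =>
    abs_sum_Ico_mul_sin_le_of_short hε ha hsmall hx₀.le <| by
      have : ((q' - p : ℕ) : ℝ) ≤ ⌊1 / x⌋₊ := by exact_mod_cast (by omega : q' - p ≤ ⌊1 / x⌋₊)
      have := this.trans (Nat.floor_le (by positivity))
      rwa [le_div_iff₀ hx₀] at this
  rcases le_total q r with hqr | hrq
  · exact (hshort q hqr).trans (le_mul_of_one_le_left hε (by linarith [pi_pos]))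
  rw [← sum_Ico_consecutive _ (Nat.le_add_right p _) hrq]
  calc _ ≤ |∑ k ∈ Ico p r, a k * sin (k * x)| + |∑ k ∈ Ico r q, a k * sin (k * x)| :=
        abs_add_le _ _
    _ ≤ ε + 3 * π * ε := add_le_add (hshort r le_rfl)
        (abs_sum_Ico_mul_sin_le_of_long hx₀ hxπ hr (fun k hk => ha k (by omega))
          (fun k hk => hsmall k (by omega)) (hvar r (by omega)) q)
    _ = (1 + 3 * π) * ε := by ring

theorem periodic_sum_mul_sin (s : Finset ℕ) (c : ℕ → ℝ) :
    Function.Periodic (fun x => ∑ k ∈ s, c k * sin (k * x)) (2 * π) := fun x =>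
  sum_congr rfl fun k _ => by rw [mul_add, sin_add_nat_mul_two_pi]

theorem odd_sum_mul_sin (s : Finset ℕ) (c : ℕ → ℝ) :
    (fun x => ∑ k ∈ s, c k * sin (k * x)).Odd := fun x => by
  simp only [mul_neg, sin_neg, sum_neg_distrib]

theorem abs_le_of_periodic_of_odd {f : ℝ → ℝ} (hper : Function.Periodic f (2 * π))
    (hodd : f.Odd) {M : ℝ} (h : ∀ x ∈ Set.Ioc 0 π, |f x| ≤ M) (x : ℝ) : |f x| ≤ M := by
  obtain ⟨y, ⟨hy₁, hy₂⟩, hxy⟩ := hper.exists_mem_Ico two_pi_pos x (-π)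
  rw [hxy]
  rcases lt_trichotomy y 0 with hy | rfl | hy
  · rw [← neg_neg y, hodd, abs_neg]
    exact h (-y) ⟨by linarith, by linarith⟩
  · rw [hodd.map_zero, abs_zero]
    exact (abs_nonneg _).trans (h π ⟨pi_pos, le_rfl⟩)
  · exact h y ⟨hy, by linarith⟩

theorem sum_Ico_le_of_sum_Ico_two_mul_le {v : ℕ → ℝ} (hv : ∀ n, 0 ≤ v n) {B : ℝ} {N : ℕ}
    (h : ∀ n ≥ N, ∑ k ∈ Ico n (2 * n), v k ≤ B / n) {p : ℕ} (hp : N ≤ p) (hp₀ : 0 < p)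
    (q : ℕ) : ∑ k ∈ Ico p q, v k ≤ 2 * B / p := by
  have hp₀' : (0 : ℝ) < p := by exact_mod_cast hp₀
  have hB : 0 ≤ B := by
    have := (sum_nonneg fun k _ => hv k).trans (h p hp)
    rwa [le_div_iff₀ hp₀', zero_mul] at this
  have hdyadic : ∀ j : ℕ, ∑ k ∈ Ico p (2 ^ j * p), v k ≤ 2 * B / p - 2 * B / (2 ^ j * p) := by
    intro j
    induction j with
    | zero => simp
    | succ j ih =>
      have hblock := h (2 ^ j * p) (hp.trans (Nat.le_mul_of_pos_left p (by positivity)))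
      rw [← mul_assoc, ← pow_succ'] at hblock
      rw [← sum_Ico_consecutive _ (Nat.le_mul_of_pos_left p (by positivity))
        (Nat.mul_le_mul_right p (Nat.pow_le_pow_right two_pos j.le_succ))]
      calc _ ≤ (2 * B / p - 2 * B / (2 ^ j * p)) + B / ((2 ^ j * p : ℕ) : ℝ) :=
            add_le_add ih hblock
        _ = 2 * B / p - 2 * B / (2 ^ (j + 1) * p) := by push_cast; field_simp; ring
  have hq : q ≤ 2 ^ q * p := (Nat.lt_two_pow_self).le.trans (Nat.le_mul_of_pos_right _ hp₀)
  calc ∑ k ∈ Ico p q, v k ≤ ∑ k ∈ Ico p (2 ^ q * p), v k :=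
        sum_le_sum_of_subset_of_nonneg (Ico_subset_Ico_right hq) fun k _ _ => hv k
    _ ≤ 2 * B / p - 2 * B / (2 ^ q * p) := hdyadic q
    _ ≤ 2 * B / p := sub_le_self _ (by positivity)

theorem sum_Icc_le_of_natCast_mul_le {a : ℕ → ℝ} {η : ℝ} {b : ℕ} (hb : 0 < b)
    (ha : ∀ k ≥ b, 0 ≤ a k) (h : ∀ k ≥ b, k * a k ≤ η) (c : ℕ) :
    ∑ k ∈ Icc b c, a k ≤ (c + 1) * (η / b) := by
  have hη : 0 ≤ η / b := (ha b le_rfl).trans (le_div_of_natCast_mul_le hb le_rfl (ha b le_rfl)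
    (h b le_rfl))
  calc ∑ k ∈ Icc b c, a k ≤ ∑ k ∈ Icc b c, η / b := sum_le_sum fun k hk =>
        le_div_of_natCast_mul_le hb (mem_Icc.1 hk).1 (ha k (mem_Icc.1 hk).1) (h k (mem_Icc.1 hk).1)
    _ = #(Icc b c) * (η / b) := by rw [sum_const, nsmul_eq_mul]
    _ ≤ (c + 1) * (η / b) := by
        gcongr
        rw [Nat.card_Icc]
        exact_mod_cast Nat.sub_le _ _

theorem tendsto_sum_Icc_floor_div_floor_mul {a : ℕ → ℝ} (ha : ∀ n : ℕ, 1 ≤ n → 0 ≤ a n)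
    (hlim : Tendsto (fun n : ℕ => (n : ℝ) * a n) atTop (𝓝 0)) {lam : ℝ} (hlam : 0 < lam) :
    Tendsto (fun n : ℕ => ∑ k ∈ Icc ⌊(n : ℝ) / lam⌋₊ ⌊lam * n⌋₊, a k) atTop (𝓝 0) := by
  have hn : Tendsto (fun n : ℕ => (n : ℝ)) atTop atTop := tendsto_natCast_atTop_atTop
  refine tendsto_order.2 ⟨fun c hc => ?_, fun ε hε => ?_⟩
  · filter_upwards [hn.eventually_ge_atTop lam] with n hn_lam
    have hb : 1 ≤ ⌊(n : ℝ) / lam⌋₊ :=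
      Nat.le_floor (by rw [Nat.cast_one, le_div_iff₀ hlam]; linarith)
    exact hc.trans_le (sum_nonneg fun k hk => ha k (hb.trans (mem_Icc.1 hk).1))
  set η := ε / (8 * lam ^ 2)
  obtain ⟨K, hK⟩ := eventually_atTop.1 ((tendsto_order.1 hlim).2 η (by positivity))
  filter_upwards [hn.eventually_ge_atTop (lam * (K + 2)), hn.eventually_ge_atTop (1 / lam)]
    with n hn₁ hn₂
  set b := ⌊(n : ℝ) / lam⌋₊
  have hfloor : (n : ℝ) / lam - 1 < b := Nat.sub_one_lt_floor _
  have hn_div : (K : ℝ) + 2 ≤ n / lam := by rw [le_div_iff₀ hlam]; linarith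
  have hKb : K ≤ b := by exact_mod_cast (show (K : ℝ) < b by linarith).le
  have hb₀ : (0 : ℝ) < b := by linarith [(K.cast_nonneg : (0 : ℝ) ≤ K)]
  have hb₀' : 0 < b := by exact_mod_cast hb₀
  have hb_ge : (n : ℝ) / (2 * lam) ≤ b := by
    have : (n : ℝ) / (2 * lam) = n / lam / 2 := by field_simp
    linarith [(K.cast_nonneg : (0 : ℝ) ≤ K)]
  have hc : (⌊lam * n⌋₊ : ℝ) + 1 ≤ 2 * lam * n := by
    have := Nat.floor_le (a := lam * n) (by positivity)
    rw [div_le_iff₀ hlam] at hn₂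
    linarith
  have hn₀ : (0 : ℝ) < n := lt_of_lt_of_le (by positivity) hn₁
  calc ∑ k ∈ Icc b ⌊lam * n⌋₊, a k ≤ (⌊lam * n⌋₊ + 1) * (η / b) :=
        sum_Icc_le_of_natCast_mul_le hb₀' (fun k hk => ha k (hb₀'.trans_le hk))
          (fun k hk => (hK k (hKb.trans hk)).le) _
    _ ≤ (2 * lam * n) * (η / (n / (2 * lam))) := by gcongr
    _ = ε / 2 := by simp only [η]; field_simp; ring
    _ < ε := half_lt_self hε

theorem IsMVBVS.tendsto_mul_sum_Icc_abs_sub {a : ℕ → ℝ} (hMVBV : IsMVBVS a)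
    (ha : ∀ n : ℕ, 1 ≤ n → 0 ≤ a n) (hlim : Tendsto (fun n : ℕ => (n : ℝ) * a n) atTop (𝓝 0)) :
    Tendsto (fun n : ℕ => (n : ℝ) * ∑ k ∈ Icc n (2 * n), |a k - a (k + 1)|) atTop (𝓝 0) := by
  obtain ⟨lam, hlam, C, -, hM⟩ := hMVBV
  have hwindow :=
    (tendsto_sum_Icc_floor_div_floor_mul ha hlim (by linarith : 0 < lam)).const_mul C
  rw [mul_zero] at hwindow
  refine squeeze_zero' (Eventually.of_forall fun n => by positivity) ?_ hwindow
  filter_upwards [eventually_gt_atTop 0] with n hn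
  have hn' : (0 : ℝ) < n := Nat.cast_pos.2 hn
  calc (n : ℝ) * ∑ k ∈ Icc n (2 * n), |a k - a (k + 1)|
      ≤ n * (C / n * ∑ k ∈ Icc ⌊(n : ℝ) / lam⌋₊ ⌊lam * n⌋₊, a k) := by gcongr; exact hM n hn
    _ = C * ∑ k ∈ Icc ⌊(n : ℝ) / lam⌋₊ ⌊lam * n⌋₊, a k := by field_simp

theorem IsMVBVS.eventually_sum_Ico_abs_sub_le {a : ℕ → ℝ} (hMVBV : IsMVBVS a)
    (ha : ∀ n : ℕ, 1 ≤ n → 0 ≤ a n) (hlim : Tendsto (fun n : ℕ => (n : ℝ) * a n) atTop (𝓝 0))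
    {ε : ℝ} (hε : 0 < ε) :
    ∀ᶠ p in atTop, ∀ q, ∑ k ∈ Ico p q, |a k - a (k + 1)| ≤ ε / p := by
  obtain ⟨N, hN⟩ := eventually_atTop.1
    ((tendsto_order.1 (hMVBV.tendsto_mul_sum_Icc_abs_sub ha hlim)).2 (ε / 2) (half_pos hε))
  have hblock : ∀ n ≥ N + 1, ∑ k ∈ Ico n (2 * n), |a k - a (k + 1)| ≤ ε / 2 / n := by
    intro n hn
    rw [le_div_iff₀ (Nat.cast_pos.2 (by omega)), mul_comm]
    refine le_trans ?_ (hN n (by omega)).le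
    exact mul_le_mul_of_nonneg_left
      (sum_le_sum_of_subset_of_nonneg Ico_subset_Icc_self fun _ _ _ => abs_nonneg _)
      n.cast_nonneg
  filter_upwards [eventually_ge_atTop (N + 1)] with p hp q
  calc ∑ k ∈ Ico p q, |a k - a (k + 1)| ≤ 2 * (ε / 2) / p :=
        sum_Ico_le_of_sum_Ico_two_mul_le (fun _ => abs_nonneg _) hblock hp (by omega) q
    _ = ε / p := by ring

theorem UniformCauchySeqOn.exists_tendstoUniformly {α β : Type*} [UniformSpace β]
    [CompleteSpace β] {F : ℕ → α → β} (hF : UniformCauchySeqOn F atTop Set.univ) :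
    ∃ f, TendstoUniformly F f atTop := by
  choose f hf using fun x => cauchySeq_tendsto_of_complete (hF.cauchySeq (Set.mem_univ x))
  exact ⟨f, tendstoUniformlyOn_univ.1 (hF.tendstoUniformlyOn_of_tendsto fun x _ => hf x)⟩

theorem uniformCauchySeqOn_sum_Icc_one {α : Type*} {f : ℕ → α → ℝ}
    (h : ∀ ε > 0, ∃ N, ∀ p ≥ N, ∀ q x, |∑ k ∈ Ico p q, f k x| ≤ ε) :
    UniformCauchySeqOn (fun n x => ∑ k ∈ Icc 1 n, f k x) atTop Set.univ := by
  have hsub : ∀ m n, m ≤ n → ∀ x,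
      ∑ k ∈ Icc 1 n, f k x - ∑ k ∈ Icc 1 m, f k x = ∑ k ∈ Ico (m + 1) (n + 1), f k x := by
    intro m n hmn x
    rw [← Ico_add_one_right_eq_Icc, ← Ico_add_one_right_eq_Icc,
      ← sum_Ico_consecutive _ (by omega : 1 ≤ m + 1) (by omega : m + 1 ≤ n + 1)]
    ring
  rw [Metric.uniformCauchySeqOn_iff]
  intro ε hε
  obtain ⟨N, hN⟩ := h (ε / 2) (half_pos hε)
  refine ⟨N, fun m hm n hn x _ => ?_⟩
  rw [Real.dist_eq]
  rcases le_total m n with hmn | hnm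
  · rw [abs_sub_comm, hsub m n hmn]
    exact (hN _ (by omega) _ _).trans_lt (half_lt_self hε)
  · rw [hsub n m hnm]
    exact (hN _ (by omega) _ _).trans_lt (half_lt_self hε)

/-- If a nonnegative MVBV sequence satisfies `n·aₙ → 0`, then its sine series
converges uniformly on ℝ to its sum function `f`. -/
theorem stmt7 (a : ℕ → ℝ) (ha : ∀ n : ℕ, 1 ≤ n → 0 ≤ a n)
    (hMVBV : IsMVBVS a)
    (hlim : Tendsto (fun n : ℕ => (n : ℝ) * a n) atTop (nhds 0)) :
    ∃ f : ℝ → ℝ,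
      TendstoUniformly
        (fun (n : ℕ) (x : ℝ) => ∑ k ∈ Finset.Icc 1 n, a k * Real.sin (k * x))
        f atTop := by
  refine UniformCauchySeqOn.exists_tendstoUniformly
    (uniformCauchySeqOn_sum_Icc_one fun ε hε => ?_)
  have hη : 0 < ε / (1 + 3 * π) := by positivity
  obtain ⟨N, hN⟩ := eventually_atTop.1 <|
    (hMVBV.eventually_sum_Ico_abs_sub_le ha hlim hη).and ((tendsto_order.1 hlim).2 _ hη)
  refine ⟨N + 1, fun p hp q x => ?_⟩
  calc |∑ k ∈ Ico p q, a k * sin (k * x)| ≤ (1 + 3 * π) * (ε / (1 + 3 * π)) :=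
        abs_le_of_periodic_of_odd (periodic_sum_mul_sin _ _) (odd_sum_mul_sin _ _)
          (fun y hy => abs_sum_Ico_mul_sin_le (by omega) (fun k hk => ha k (by omega))
            (fun k hk => (hN k (by omega)).2.le) (fun r hr => (hN r (by omega)).1) q hy) x
    _ = ε := by field_simp
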